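/- The polynomial κ(x,y,z) = x² + y² + z² − xyz − 2 is tame: the norm of its gradient tends to infinity as ‖(x,y,z)‖ → ∞. Equivalently, for every M > 0 there exists R > 0 such that ‖(x,y,z)‖ > R implies ‖(2x−yz, 2y−xz, 2z−xy)‖ > M. -/
import Mathlib

/-- Key estimate: if one coordinate is large and two gradient components are
small, the third gradient component is large. -/
lemma kappa_key (M : ℝ) (hM : M > 0) (x y z : ℂ) (hz : ‖z‖ > M + 3)
    (ha : ‖2 * x - y * z‖ ≤ M) (hb : ‖2 * y - x * z‖ ≤ M) :
    ‖2 * z - x * y‖ > M := by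
  have h4 : ‖(4 : ℂ)‖ = 4 := by norm_num
  have hzsq : (‖z‖ - 2) * (‖z‖ + 2) ≤ ‖4 - z ^ 2‖ := by
    have := norm_sub_norm_le (z ^ 2) (4 : ℂ)
    rw [norm_sub_rev] at this
    rw [norm_pow] at this
    nlinarith [this]
  -- bound ‖x‖
  have hx1 : ‖x‖ < 1 := by
    have e : x * (4 - z ^ 2) = 2 * (2 * x - y * z) + z * (2 * y - x * z) := by ring
    have h1 : ‖x‖ * ‖4 - z ^ 2‖ ≤ M * (2 + ‖z‖) := by
      calc ‖x‖ * ‖4 - z ^ 2‖ = ‖x * (4 - z ^ 2)‖ := (norm_mul _ _).symm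
        _ = ‖2 * (2 * x - y * z) + z * (2 * y - x * z)‖ := by rw [e]
        _ ≤ ‖2 * (2 * x - y * z)‖ + ‖z * (2 * y - x * z)‖ := norm_add_le _ _
        _ = 2 * ‖2 * x - y * z‖ + ‖z‖ * ‖2 * y - x * z‖ := by
            rw [norm_mul, norm_mul]; norm_num
        _ ≤ 2 * M + ‖z‖ * M := by
            have hz0 : (0:ℝ) ≤ ‖z‖ := norm_nonneg _
            gcongr
        _ = M * (2 + ‖z‖) := by ring
    have hx0 : (0:ℝ) ≤ ‖x‖ := norm_nonneg _
    have h3 : ‖x‖ * ((‖z‖ - 2) * (‖z‖ + 2)) ≤ M * (2 + ‖z‖) :=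
      le_trans (mul_le_mul_of_nonneg_left hzsq hx0) h1
    have hp : (0:ℝ) < ‖z‖ + 2 := by linarith
    have h2 : ‖x‖ * (‖z‖ - 2) ≤ M := by nlinarith [h3, hp]
    nlinarith [h2, hz, hM, hx0]
  -- bound ‖y‖
  have hy1 : ‖y‖ < 1 := by
    have e : y * (4 - z ^ 2) = z * (2 * x - y * z) + 2 * (2 * y - x * z) := by ring
    have h1 : ‖y‖ * ‖4 - z ^ 2‖ ≤ M * (2 + ‖z‖) := by
      calc ‖y‖ * ‖4 - z ^ 2‖ = ‖y * (4 - z ^ 2)‖ := (norm_mul _ _).symm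
        _ = ‖z * (2 * x - y * z) + 2 * (2 * y - x * z)‖ := by rw [e]
        _ ≤ ‖z * (2 * x - y * z)‖ + ‖2 * (2 * y - x * z)‖ := norm_add_le _ _
        _ = ‖z‖ * ‖2 * x - y * z‖ + 2 * ‖2 * y - x * z‖ := by
            rw [norm_mul, norm_mul]; norm_num
        _ ≤ ‖z‖ * M + 2 * M := by
            have hz0 : (0:ℝ) ≤ ‖z‖ := norm_nonneg _
            gcongr
        _ = M * (2 + ‖z‖) := by ring
    have hy0 : (0:ℝ) ≤ ‖y‖ := norm_nonneg _
    have h3 : ‖y‖ * ((‖z‖ - 2) * (‖z‖ + 2)) ≤ M * (2 + ‖z‖) :=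
      le_trans (mul_le_mul_of_nonneg_left hzsq hy0) h1
    have hp : (0:ℝ) < ‖z‖ + 2 := by linarith
    have h2 : ‖y‖ * (‖z‖ - 2) ≤ M := by nlinarith [h3, hp]
    nlinarith [h2, hz, hM, hy0]
  have hlow : 2 * ‖z‖ - ‖x‖ * ‖y‖ ≤ ‖2 * z - x * y‖ := by
    have := norm_sub_norm_le (2 * z) (x * y)
    rw [norm_mul, norm_mul] at this
    simp only [Complex.norm_ofNat] at this
    linarith [this]
  nlinarith [norm_nonneg x, norm_nonneg y]

/-- κ is tame: the norm of its gradient tends to infinity as ‖(x,y,z)‖ → ∞. -/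
theorem kappa_tame :
    ∀ M : ℝ, M > 0 → ∃ R : ℝ, R > 0 ∧ ∀ x y z : ℂ,
      ‖(x, y, z)‖ > R → ‖(2 * x - y * z, 2 * y - x * z, 2 * z - x * y)‖ > M := by
  intro M hM
  refine ⟨M + 3, by linarith, fun x y z hR => ?_⟩
  rw [Prod.norm_def, Prod.norm_def] at hR
  rw [Prod.norm_def, Prod.norm_def]
  simp only [max_lt_iff, lt_max_iff] at hR ⊢
  by_contra hcon
  push_neg at hcon
  obtain ⟨ha, hb, hc⟩ := hcon
  rcases hR with hx | hy | hz
  · -- |x| large: use key with (y, z, x)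
    have := kappa_key M hM y z x hx (by rw [show 2*y - z*x = 2*y - x*z by ring]; exact hb)
      (by rw [show 2*z - y*x = 2*z - x*y by ring]; exact hc)
    rw [show 2*x - y*z = 2*x - y*z from rfl] at this
    linarith
  · -- |y| large: use key with (z, x, y)
    have := kappa_key M hM z x y hy (by rw [show 2*z - x*y = 2*z - x*y from rfl]; exact hc)
      (by rw [show 2*x - z*y = 2*x - y*z by ring]; exact ha)
    rw [show 2*y - z*x = 2*y - x*z by ring] at this
    linarith
  · have := kappa_key M hM x y z hz ha hb
    linarith
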